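/- arXiv:math/0605756 — 6 statements merged into one kernel-verified Lean document; each statement's English description precedes it below -/
import Mathlib

section
/- Let ξ be a skew-Hermitian endomorphism of V and v ∈ V. If ‖exp(itξ)v‖² ≥ ‖v‖² for all real t (i.e., the function t ↦ ‖exp(itξ)v‖² attains its minimum at t = 0), then ⟨ξv, v⟩ = 0. (This is the computation proving the easy direction of the Kempf–Ness criterion: at a point of minimal norm on a closed orbit, the moment map μ(v)(ξ) = (1/2i)⟨ξv, v⟩ vanishes.) -/
/-!
Along the one-parameter group `t ↦ exp(t • iξ)`, the function `t ↦ ‖exp(t • iξ) v‖²` has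
derivative `2 Re⟪iξv, v⟫ = 2 Im⟪ξv, v⟫` at `0`, so minimality at `0` forces `Im⟪ξv, v⟫ = 0`;
skew-Hermitianness makes `⟪ξv, v⟫` purely imaginary, hence it vanishes.
-/

open NormedSpace

section
variable {E : Type*} [NormedAddCommGroup E] [InnerProductSpace ℂ E] [CompleteSpace E]

theorem hasDerivAt_norm_sq_exp_smul_apply (A : E →L[ℂ] E) (v : E) :
    HasDerivAt (fun t : ℝ => ‖exp (t • A) v‖ ^ 2) (2 * (inner ℂ (A v) v).re) 0 := by
  let _ : InnerProductSpace ℝ E := InnerProductSpace.complexToReal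
  have hexp : HasDerivAt (fun t : ℝ => exp (t • A)) (exp ((0 : ℝ) • A) * A) 0 :=
    hasDerivAt_exp_smul_const A 0
  have hu : HasDerivAt (fun t : ℝ => exp (t • A) v) (A v) 0 := by
    simpa [Function.comp_def] using
      ((ContinuousLinearMap.apply ℂ E v).restrictScalars ℝ).hasFDerivAt.comp_hasDerivAt 0 hexp
  convert hu.norm_sq using 2
  rw [zero_smul, exp_zero, one_apply_eq_self, real_inner_eq_re_inner, ← inner_conj_symm,
    Complex.conj_re, RCLike.re_to_complex]

theorem re_inner_apply_self_eq_zero_of_le_norm_exp_smul_apply (A : E →L[ℂ] E) (v : E)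
    (hmin : ∀ t : ℝ, ‖v‖ ^ 2 ≤ ‖exp (t • A) v‖ ^ 2) : (inner ℂ (A v) v).re = 0 := by
  have hloc : IsLocalMin (fun t : ℝ => ‖exp (t • A) v‖ ^ 2) 0 :=
    Filter.Eventually.of_forall fun t => by simpa using hmin t
  simpa using hloc.hasDerivAt_eq_zero (hasDerivAt_norm_sq_exp_smul_apply A v)

end

theorem re_inner_apply_self_eq_zero_of_skew {𝕜 E : Type*} [RCLike 𝕜] [NormedAddCommGroup E]
    [InnerProductSpace 𝕜 E] {ξ : E → E} (hskew : ∀ u w : E, inner 𝕜 (ξ u) w = -inner 𝕜 u (ξ w))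
    (v : E) : RCLike.re (inner 𝕜 (ξ v) v) = 0 := by
  have h := congrArg RCLike.re (hskew v v)
  simp only [← inner_conj_symm v (ξ v), map_neg, RCLike.conj_re] at h
  linarith

/-- Let `ξ` be a skew-Hermitian endomorphism of a finite-dimensional
complex inner product space `V` and `v ∈ V`. If `‖exp(itξ)v‖² ≥ ‖v‖²` for all real `t`
(the function `t ↦ ‖exp(itξ)v‖²` attains its minimum at `t = 0`), then `⟪ξv, v⟫ = 0`. -/
theorem kempfNess_easy_direction
    {V : Type*} [NormedAddCommGroup V] [InnerProductSpace ℂ V] [FiniteDimensional ℂ V]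
    (ξ : V →L[ℂ] V)
    (hskew : ∀ u w : V, inner ℂ (ξ u) w = -(inner ℂ u (ξ w) : ℂ))
    (v : V)
    (hmin : ∀ t : ℝ, ‖v‖ ^ 2 ≤ ‖(NormedSpace.exp (((t : ℂ) * Complex.I) • ξ)) v‖ ^ 2) :
    (inner ℂ (ξ v) v : ℂ) = 0 := by
  have hre : (inner ℂ (ξ v) v).re = 0 := re_inner_apply_self_eq_zero_of_skew hskew v
  have hIξ : (inner ℂ ((Complex.I • ξ) v) v).re = 0 :=
    re_inner_apply_self_eq_zero_of_le_norm_exp_smul_apply _ v fun t => by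
      rw [← smul_one_smul ℂ t, smul_smul, Complex.real_smul, mul_one]
      exact hmin t
  -- `Re⟪iξv, v⟫ = Re(-i⟪ξv, v⟫) = Im⟪ξv, v⟫`
  have him : (inner ℂ (ξ v) v).im = 0 := by
    simpa [inner_smul_left] using hIξ
  exact Complex.ext hre him
end

section
/- Let τ : ℂˣ → GL(V) be a group homomorphism such that τ(z) is unitary whenever |z| = 1, admitting a weight-space decomposition: finitely many subspaces V_i ⊆ V indexed by integers i with V = ⨁_i V_i and τ(z)x = zⁱx for all x ∈ V_i, z ∈ ℂˣ. Let v ∈ V with components v_i ∈ V_i. If v_i = 0 for all i < 0 and Σ_i i·‖v_i‖² = 0, then v = v_0; in particular τ(z)v = v for all z ∈ ℂˣ. (This is the computation proving the nontrivial direction of the Kempf–Ness criterion: a zero of the moment map whose orbit under a destabilizing one-parameter subgroup has a limit is fixed by that subgroup.) -/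
theorem eq_zero_of_sum_mul_norm_sq_eq_zero {E : Type*} [NormedAddCommGroup E] {S : Finset ℤ}
    {f : ℤ → E} (hneg : ∀ i < 0, f i = 0) (hsum : ∑ i ∈ S, (i : ℝ) * ‖f i‖ ^ 2 = 0)
    {i : ℤ} (hi : i ∈ S) (hi0 : i ≠ 0) : f i = 0 := by
  have hterm : ∀ j ∈ S, 0 ≤ (j : ℝ) * ‖f j‖ ^ 2 := fun j _ => by
    rcases lt_or_ge j 0 with hj | hj
    · simp [hneg j hj]
    · exact mul_nonneg (by exact_mod_cast hj) (by positivity)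
  simpa [hi0] using (Finset.sum_eq_zero_iff_of_nonneg hterm).mp hsum i hi

theorem kempfNess_hard_direction_computation_general
    {V : Type*} [NormedAddCommGroup V] [InnerProductSpace ℂ V]
    (τ : ℂˣ →* (V ≃ₗ[ℂ] V))
    (S : Finset ℤ) (Vwt : ℤ → Submodule ℂ V)
    (hsupp : ∀ i ∉ S, Vwt i = ⊥)
    (hwt : ∀ (i : ℤ), ∀ x ∈ Vwt i, ∀ z : ℂˣ, τ z x = ((z : ℂ) ^ i) • x)
    (v : V) (vc : ℤ → V) (hvc : ∀ i, vc i ∈ Vwt i) (hv : v = ∑ i ∈ S, vc i)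
    (hnonneg : ∀ i < 0, vc i = 0)
    (hmoment : ∑ i ∈ S, (i : ℝ) * ‖vc i‖ ^ 2 = 0) :
    v = vc 0 ∧ ∀ z : ℂˣ, τ z v = v := by
  have hv0 : v = vc 0 := by
    rw [hv]
    refine Finset.sum_eq_single 0
      (fun i hi hi0 => eq_zero_of_sum_mul_norm_sq_eq_zero hnonneg hmoment hi hi0) fun h0 => ?_
    simpa [hsupp 0 h0] using hvc 0
  refine ⟨hv0, fun z => ?_⟩
  rw [hv0, hwt 0 _ (hvc 0) z, zpow_zero, one_smul]

/-- Let `τ : ℂˣ → GL(V)` be a group homomorphism, unitary on the unit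
circle, admitting a weight-space decomposition `V = ⨁ᵢ Vᵢ` (finitely many nonzero
subspaces, indexed by integers) with `τ z x = zⁱ • x` for `x ∈ Vᵢ`.  Let `v ∈ V` with
components `vᵢ ∈ Vᵢ`.  If `vᵢ = 0` for all `i < 0` and `Σᵢ i‖vᵢ‖² = 0`, then `v = v₀`;
in particular `τ z v = v` for all `z ∈ ℂˣ`. -/
theorem kempfNess_hard_direction_computation
    {V : Type*} [NormedAddCommGroup V] [InnerProductSpace ℂ V] [FiniteDimensional ℂ V]
    (τ : ℂˣ →* (V ≃ₗ[ℂ] V))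
    (hunit : ∀ z : ℂˣ, ‖(z : ℂ)‖ = 1 → ∀ x y : V, inner ℂ (τ z x) (τ z y) = (inner ℂ x y : ℂ))
    (S : Finset ℤ) (Vwt : ℤ → Submodule ℂ V)
    (hne : ∀ i ∈ S, Vwt i ≠ ⊥) (hsupp : ∀ i ∉ S, Vwt i = ⊥)
    (hdec : DirectSum.IsInternal fun i : ℤ => Vwt i)
    (hwt : ∀ (i : ℤ), ∀ x ∈ Vwt i, ∀ z : ℂˣ, τ z x = ((z : ℂ) ^ i) • x)
    (v : V) (vc : ℤ → V) (hvc : ∀ i, vc i ∈ Vwt i) (hv : v = ∑ i ∈ S, vc i)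
    (hnonneg : ∀ i < 0, vc i = 0)
    (hmoment : ∑ i ∈ S, (i : ℝ) * ‖vc i‖ ^ 2 = 0) :
    v = vc 0 ∧ ∀ z : ℂˣ, τ z v = v :=
  kempfNess_hard_direction_computation_general τ S Vwt hsupp hwt v vc hvc hv hnonneg hmoment
end

section
/- Let 𝔨 be a real Lie subalgebra of the endomorphisms of V consisting of skew-Hermitian operators (i.e., a real subspace of skew-Hermitian endomorphisms closed under the commutator [ξ, η] = ξ∘η − η∘ξ), and let v ∈ V satisfy ⟨ξv, v⟩ = 0 for all ξ ∈ 𝔨. Then ⟨ξv, ηv⟩ ∈ ℝ for all ξ, η ∈ 𝔨; that is, Im⟨ξv, ηv⟩ = 0, so the tangent space 𝔨·v to the compact orbit at v is isotropic for the symplectic form ω = Im⟨·,·⟩. -/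
/-!
Applying the hypothesis to the bracket `[ξ, η]` and moving `ξ` and `η` across the inner product
by skew-adjointness gives `⟪ξ v, η v⟫ = ⟪η v, ξ v⟫`, i.e. `⟪ξ v, η v⟫` equals its own conjugate.
-/

open scoped InnerProductSpace

theorem inner_apply_comm_of_inner_lie_apply_self_eq_zero
    {𝕜 E : Type*} [RCLike 𝕜] [NormedAddCommGroup E] [InnerProductSpace 𝕜 E] {ξ η : E →ₗ[𝕜] E}
    (hξ : ∀ u w, ⟪ξ u, w⟫_𝕜 = -⟪u, ξ w⟫_𝕜) (hη : ∀ u w, ⟪η u, w⟫_𝕜 = -⟪u, η w⟫_𝕜) {v : E}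
    (hv : ⟪(ξ ∘ₗ η - η ∘ₗ ξ) v, v⟫_𝕜 = 0) : ⟪ξ v, η v⟫_𝕜 = ⟪η v, ξ v⟫_𝕜 := by
  have h : ⟪ξ (η v), v⟫_𝕜 = ⟪η (ξ v), v⟫_𝕜 := by
    simpa only [LinearMap.sub_apply, LinearMap.comp_apply, inner_sub_left, sub_eq_zero] using hv
  rw [hξ (η v) v, hη (ξ v) v, neg_inj] at h
  exact h.symm

theorem compact_orbit_isotropic_general
    {V : Type*} [NormedAddCommGroup V] [InnerProductSpace ℂ V]
    (k : Set (V →ₗ[ℂ] V))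
    (hskew : ∀ ξ ∈ k, ∀ u w : V, inner ℂ (ξ u) w = -(inner ℂ u (ξ w) : ℂ))
    (hbracket : ∀ ξ ∈ k, ∀ η ∈ k, ξ ∘ₗ η - η ∘ₗ ξ ∈ k)
    (v : V) (hv : ∀ ξ ∈ k, (inner ℂ (ξ v) v : ℂ) = 0) :
    ∀ ξ ∈ k, ∀ η ∈ k, (inner ℂ (ξ v) (η v) : ℂ).im = 0 := by
  intro ξ hξ η hη
  have hcomm : ⟪ξ v, η v⟫_ℂ = ⟪η v, ξ v⟫_ℂ :=
    inner_apply_comm_of_inner_lie_apply_self_eq_zero (hskew ξ hξ) (hskew η hη)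
      (hv _ (hbracket ξ hξ η hη))
  rw [← inner_conj_symm (η v) (ξ v)] at hcomm
  exact Complex.conj_eq_iff_im.mp hcomm.symm

/-- Let `𝔨` be a real Lie subalgebra of the endomorphisms of a
finite-dimensional complex inner product space `V` consisting of skew-Hermitian operators
(a real subspace of skew-Hermitian endomorphisms closed under the commutator), and let
`v ∈ V` satisfy `⟪ξv, v⟫ = 0` for all `ξ ∈ 𝔨`.  Then `Im ⟪ξv, ηv⟫ = 0` for all
`ξ, η ∈ 𝔨`: the tangent space `𝔨·v` to the compact orbit at `v` is isotropic for the
symplectic form `ω = Im ⟪·,·⟫`. -/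
theorem compact_orbit_isotropic
    {V : Type*} [NormedAddCommGroup V] [InnerProductSpace ℂ V] [FiniteDimensional ℂ V]
    (k : Set (V →ₗ[ℂ] V))
    (hskew : ∀ ξ ∈ k, ∀ u w : V, inner ℂ (ξ u) w = -(inner ℂ u (ξ w) : ℂ))
    (hadd : ∀ ξ ∈ k, ∀ η ∈ k, ξ + η ∈ k)
    (hsmul : ∀ (c : ℝ), ∀ ξ ∈ k, (c : ℂ) • ξ ∈ k)
    (hbracket : ∀ ξ ∈ k, ∀ η ∈ k, ξ ∘ₗ η - η ∘ₗ ξ ∈ k)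
    (v : V) (hv : ∀ ξ ∈ k, (inner ℂ (ξ v) v : ℂ) = 0) :
    ∀ ξ ∈ k, ∀ η ∈ k, (inner ℂ (ξ v) (η v) : ℂ).im = 0 :=
  compact_orbit_isotropic_general k hskew hbracket v hv
end

section
/- Let 𝔨 be a real Lie subalgebra of the endomorphisms of V consisting of skew-Hermitian operators, and let v ∈ V satisfy ⟨ξv, v⟩ = 0 for all ξ ∈ 𝔨. Then the real dimension of the real subspace 𝔨·v = {ξv : ξ ∈ 𝔨} is at most the complex dimension of its complex span: dim_ℝ span_ℝ{ξv : ξ ∈ 𝔨} ≤ dim_ℂ span_ℂ{ξv : ξ ∈ 𝔨}. (Since 𝔤 = 𝔨 ⊕ i𝔨, this is the inequality dim_ℝ Kv ≤ dim_ℂ Gv, equation (1) of the paper.) -/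
/-!
For `ξ, η ∈ 𝔨`, skew-Hermitianity turns `⟪[ξ, η] v, v⟫ = 0` into `⟪ξ v, η v⟫ = ⟪η v, ξ v⟫`, so the
Hermitian product is real on the real span `U` of `𝔨 · v`. A real-orthonormal basis of `U` is then
orthonormal, hence linearly independent, over `ℂ`, which bounds `dim_ℝ U` by the complex dimension
of the complex span of `U`.
-/

open scoped ComplexConjugate InnerProductSpace

section

variable {V : Type*} [NormedAddCommGroup V] [InnerProductSpace ℂ V]

theorem im_inner_apply_eq_zero_of_inner_commutator_apply_eq_zero {ξ η : V →ₗ[ℂ] V}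
    (hξ : ∀ u w : V, ⟪ξ u, w⟫_ℂ = -⟪u, ξ w⟫_ℂ) (hη : ∀ u w : V, ⟪η u, w⟫_ℂ = -⟪u, η w⟫_ℂ)
    {v : V} (hv : ⟪(ξ ∘ₗ η - η ∘ₗ ξ) v, v⟫_ℂ = 0) :
    (⟪ξ v, η v⟫_ℂ).im = 0 := by
  rw [LinearMap.sub_apply, inner_sub_left, LinearMap.comp_apply, LinearMap.comp_apply,
    hξ (η v) v, hη (ξ v) v] at hv
  rw [← Complex.conj_eq_iff_im, inner_conj_symm]
  linear_combination -hv

theorem im_inner_eq_zero_of_mem_span {S : Set V} (hS : ∀ x ∈ S, ∀ y ∈ S, (⟪x, y⟫_ℂ).im = 0)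
    {x y : V} (hx : x ∈ Submodule.span ℝ S) (hy : y ∈ Submodule.span ℝ S) :
    (⟪x, y⟫_ℂ).im = 0 := by
  induction hx, hy using Submodule.span_induction₂ with
  | mem_mem x y hx hy => exact hS x hx y hy
  | zero_left => simp
  | zero_right => simp
  | add_left x y z _ _ _ hxz hyz => simp [hxz, hyz]
  | add_right x y z _ _ _ hxy hxz => simp [hxy, hxz]
  | smul_left r x y _ _ hxy => simp [← Complex.coe_smul, hxy]
  | smul_right r x y _ _ hxy => simp [← Complex.coe_smul, hxy]

theorem finrank_le_finrank_span_complex_of_im_inner_eq_zero [FiniteDimensional ℂ V]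
    {U : Submodule ℝ V} (hU : ∀ x ∈ U, ∀ y ∈ U, (⟪x, y⟫_ℂ).im = 0) :
    Module.finrank ℝ U ≤ Module.finrank ℂ (Submodule.span ℂ (U : Set V)) := by
  let _ := InnerProductSpace.complexToReal (G := V)
  let b := stdOrthonormalBasis ℝ U
  have hb : Orthonormal ℂ fun i => (b i : V) := by
    rw [orthonormal_iff_ite]
    intro i j
    rw [← Complex.conj_eq_iff_re.mp (Complex.conj_eq_iff_im.mpr (hU _ (b i).2 _ (b j).2)),
      ← RCLike.re_to_complex, ← real_inner_eq_re_inner ℂ, ← Submodule.coe_inner, b.inner_eq_ite]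
    split_ifs <;> simp
  calc Module.finrank ℝ U = Fintype.card (Fin (Module.finrank ℝ U)) := (Fintype.card_fin _).symm
    _ = Module.finrank ℂ (Submodule.span ℂ (Set.range fun i => (b i : V))) :=
      (finrank_span_eq_card hb.linearIndependent).symm
    _ ≤ Module.finrank ℂ (Submodule.span ℂ (U : Set V)) :=
      Submodule.finrank_mono (Submodule.span_mono (Set.range_subset_iff.mpr fun i => (b i).2))

end

theorem real_orbit_dim_le_complex_orbit_dim_general
    {V : Type*} [NormedAddCommGroup V] [InnerProductSpace ℂ V] [FiniteDimensional ℂ V]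
    (k : Set (V →ₗ[ℂ] V))
    (hskew : ∀ ξ ∈ k, ∀ u w : V, inner ℂ (ξ u) w = -(inner ℂ u (ξ w) : ℂ))
    (hbracket : ∀ ξ ∈ k, ∀ η ∈ k, ξ ∘ₗ η - η ∘ₗ ξ ∈ k)
    (v : V) (hv : ∀ ξ ∈ k, (inner ℂ (ξ v) v : ℂ) = 0) :
    Module.finrank ℝ (Submodule.span ℝ ((fun ξ : V →ₗ[ℂ] V => ξ v) '' k)) ≤
      Module.finrank ℂ (Submodule.span ℂ ((fun ξ : V →ₗ[ℂ] V => ξ v) '' k)) := by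
  have hreal : ∀ x ∈ (fun ξ : V →ₗ[ℂ] V => ξ v) '' k, ∀ y ∈ (fun ξ : V →ₗ[ℂ] V => ξ v) '' k,
      (⟪x, y⟫_ℂ).im = 0 := by
    rintro _ ⟨ξ, hξ, rfl⟩ _ ⟨η, hη, rfl⟩
    exact im_inner_apply_eq_zero_of_inner_commutator_apply_eq_zero (hskew ξ hξ) (hskew η hη)
      (hv _ (hbracket ξ hξ η hη))
  rw [← Submodule.span_span_of_tower ℝ ℂ]
  exact finrank_le_finrank_span_complex_of_im_inner_eq_zero fun x hx y hy =>
    im_inner_eq_zero_of_mem_span hreal hx hy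

/-- Let `𝔨` be a real Lie subalgebra of the endomorphisms of a
finite-dimensional complex inner product space `V` consisting of skew-Hermitian operators,
and let `v ∈ V` satisfy `⟪ξv, v⟫ = 0` for all `ξ ∈ 𝔨`.  Then the real dimension of the
real span of `𝔨·v = {ξv : ξ ∈ 𝔨}` is at most the complex dimension of its complex span:
`dim_ℝ Kv ≤ dim_ℂ Gv` (equation (1) of the paper). -/
theorem real_orbit_dim_le_complex_orbit_dim
    {V : Type*} [NormedAddCommGroup V] [InnerProductSpace ℂ V] [FiniteDimensional ℂ V]
    (k : Set (V →ₗ[ℂ] V))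
    (hskew : ∀ ξ ∈ k, ∀ u w : V, inner ℂ (ξ u) w = -(inner ℂ u (ξ w) : ℂ))
    (hadd : ∀ ξ ∈ k, ∀ η ∈ k, ξ + η ∈ k)
    (hsmul : ∀ (c : ℝ), ∀ ξ ∈ k, (c : ℂ) • ξ ∈ k)
    (hbracket : ∀ ξ ∈ k, ∀ η ∈ k, ξ ∘ₗ η - η ∘ₗ ξ ∈ k)
    (v : V) (hv : ∀ ξ ∈ k, (inner ℂ (ξ v) v : ℂ) = 0) :
    Module.finrank ℝ (Submodule.span ℝ ((fun ξ : V →ₗ[ℂ] V => ξ v) '' k)) ≤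
      Module.finrank ℂ (Submodule.span ℂ ((fun ξ : V →ₗ[ℂ] V => ξ v) '' k)) :=
  real_orbit_dim_le_complex_orbit_dim_general k hskew hbracket v hv
end

section
/- Let W be a complex vector space and 𝔨 a real-linear subspace of W (viewed as a real vector space) with 𝔨 ∩ i𝔨 = {0}. Let U be a complex-linear subspace of W such that dim_ℝ(U ∩ 𝔨) ≥ dim_ℂ U. Then U ∩ 𝔨 is a real form of U: U = (U ∩ 𝔨) ⊕ i(U ∩ 𝔨) as a real vector space, and in particular dim_ℝ(U ∩ 𝔨) = dim_ℂ U. (Applied in the paper with W = 𝔤, 𝔨 a compact real form, and U = 𝔤_v the stabilizer subalgebra, giving that 𝔤_v ∩ 𝔨 is a real form of 𝔤_v.) -/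
/-! Let `V = U ∩ 𝔨`. Since `𝔨 ∩ i𝔨 = 0`, also `V ∩ iV = 0`, so `V + iV` is a real subspace of `U`
of dimension `2 dim_ℝ V ≥ 2 dim_ℂ U = dim_ℝ U`. Hence `V ⊕ iV = U`, and the dimensions agree. -/

open Module
open scoped Pointwise

namespace Submodule

variable {W : Type*} [AddCommGroup W] [Module ℂ W]

theorem finrank_I_smul (V : Submodule ℝ W) :
    finrank ℝ ↥(Complex.I • V) = finrank ℝ V :=
  (LinearEquiv.finrank_eq
    (V.equivMapOfInjective _ (smul_right_injective W Complex.I_ne_zero))).symm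

theorem I_smul_le_restrictScalars {V : Submodule ℝ W} {U : Submodule ℂ W}
    (h : V ≤ U.restrictScalars ℝ) : Complex.I • V ≤ U.restrictScalars ℝ := by
  rintro _ ⟨v, hv, rfl⟩
  exact U.smul_mem Complex.I (h hv)

theorem mem_sup_I_smul_iff {V : Submodule ℝ W} {u : W} :
    u ∈ V ⊔ Complex.I • V ↔ ∃ a ∈ V, ∃ b ∈ V, u = a + Complex.I • b := by
  simp only [mem_sup, mem_smul_pointwise_iff_exists]
  constructor
  · rintro ⟨a, ha, _, ⟨b, hb, rfl⟩, rfl⟩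
    exact ⟨a, ha, b, hb, rfl⟩
  · rintro ⟨a, ha, b, hb, rfl⟩
    exact ⟨a, ha, _, ⟨b, hb, rfl⟩, rfl⟩

theorem eq_zero_of_add_I_smul_eq_zero {V : Submodule ℝ W} (hV : Disjoint V (Complex.I • V))
    {a b : W} (ha : a ∈ V) (hb : b ∈ V) (h : a + Complex.I • b = 0) : a = 0 ∧ b = 0 := by
  have ha' : a ∈ Complex.I • V := by
    rw [eq_neg_of_add_eq_zero_left h, ← smul_neg]
    exact smul_mem_pointwise_smul _ _ _ (V.neg_mem hb)
  have ha0 : a = 0 := (disjoint_def.mp hV) a ha ha'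
  refine ⟨ha0, ?_⟩
  rw [ha0, zero_add] at h
  exact (smul_eq_zero.mp h).resolve_left Complex.I_ne_zero

theorem finrank_sup_I_smul {V : Submodule ℝ W} [FiniteDimensional ℝ V]
    (hV : Disjoint V (Complex.I • V)) :
    finrank ℝ ↥(V ⊔ Complex.I • V) = 2 * finrank ℝ V := by
  have : FiniteDimensional ℝ ↥(Complex.I • V) := Module.Finite.map V _
  have h := finrank_sup_add_finrank_inf_eq V (Complex.I • V)
  rw [hV.eq_bot, finrank_bot, add_zero, finrank_I_smul] at h
  omega

theorem sup_I_smul_eq_restrictScalars_and_finrank_eq [FiniteDimensional ℂ W] {V : Submodule ℝ W}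
    {U : Submodule ℂ W} (hVU : V ≤ U.restrictScalars ℝ) (hV : Disjoint V (Complex.I • V))
    (hdim : finrank ℂ U ≤ finrank ℝ V) :
    V ⊔ Complex.I • V = U.restrictScalars ℝ ∧ finrank ℝ V = finrank ℂ U := by
  have : FiniteDimensional ℝ W := Module.Finite.trans ℂ W
  have hle : V ⊔ Complex.I • V ≤ U.restrictScalars ℝ :=
    sup_le hVU (I_smul_le_restrictScalars hVU)
  have hU : finrank ℝ (U.restrictScalars ℝ) = 2 * finrank ℂ U := finrank_real_of_complex U
  have hrank := finrank_mono hle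
  rw [finrank_sup_I_smul hV, hU] at hrank
  exact ⟨eq_of_le_of_finrank_le hle (by rw [finrank_sup_I_smul hV, hU]; omega), by omega⟩

end Submodule

/-- Let `W` be a finite-dimensional complex vector space and `𝔨` a
real-linear subspace of `W` with `𝔨 ∩ i𝔨 = 0`.  Let `U` be a complex subspace of `W`
with `dim_ℝ (U ∩ 𝔨) ≥ dim_ℂ U`.  Then `U ∩ 𝔨` is a real form of `U`:
`U = (U ∩ 𝔨) ⊕ i(U ∩ 𝔨)` as a real vector space, and `dim_ℝ (U ∩ 𝔨) = dim_ℂ U`. -/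
theorem real_form_of_large_real_part
    {W : Type*} [AddCommGroup W] [Module ℂ W] [FiniteDimensional ℂ W]
    (k : Submodule ℝ W)
    (hki : ∀ x ∈ k, (∃ y ∈ k, x = Complex.I • y) → x = 0)
    (U : Submodule ℂ W)
    (hdim : Module.finrank ℂ U ≤ Module.finrank ℝ (U.restrictScalars ℝ ⊓ k : Submodule ℝ W)) :
    (∀ u ∈ U, ∃ a ∈ U.restrictScalars ℝ ⊓ k, ∃ b ∈ U.restrictScalars ℝ ⊓ k,
        u = a + Complex.I • b) ∧
    (∀ a ∈ U.restrictScalars ℝ ⊓ k, ∀ b ∈ U.restrictScalars ℝ ⊓ k,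
        a + Complex.I • b = 0 → a = 0 ∧ b = 0) ∧
    Module.finrank ℝ (U.restrictScalars ℝ ⊓ k : Submodule ℝ W) = Module.finrank ℂ U := by
  set V : Submodule ℝ W := U.restrictScalars ℝ ⊓ k
  have hk : Disjoint k (Complex.I • k) := by
    rw [Submodule.disjoint_def]
    rintro x hx ⟨y, hy, rfl⟩
    exact hki _ hx ⟨y, hy, rfl⟩
  have hV : Disjoint V (Complex.I • V) :=
    hk.mono inf_le_right (smul_mono_right _ inf_le_right)
  obtain ⟨hsup, hrank⟩ :=
    Submodule.sup_I_smul_eq_restrictScalars_and_finrank_eq inf_le_left hV hdim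
  refine ⟨fun u hu => ?_, fun a ha b hb h => ?_, hrank⟩
  · rw [← Submodule.restrictScalars_mem ℝ, ← hsup] at hu
    exact Submodule.mem_sup_I_smul_iff.mp hu
  · exact Submodule.eq_zero_of_add_I_smul_eq_zero hV ha hb h
end

section
/- Let 𝔨 be a real Lie subalgebra of the endomorphism algebra of V (with bracket the commutator) consisting of skew-Hermitian operators. Then 𝔨 is a reductive Lie algebra: 𝔨 decomposes as the direct sum of its center and its derived subalgebra [𝔨, 𝔨], and [𝔨, 𝔨] is a semisimple Lie algebra. (This is the reason why the stabilizer subalgebra in the proof of the Matsushima criterion, having a compact real form, is reductive.) -/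
/-!
The real form `Φ(x, y) = -Re tr(x y)` is symmetric and `ad`-invariant on any real Lie algebra of
complex endomorphisms, and on skew-Hermitian operators it is positive definite, since
`-tr(ξ²) = ∑ ‖ξ eᵢ‖²` in an orthonormal basis. For an invariant anisotropic form, the centre is
the orthogonal complement of `[𝔨, 𝔨]`, which gives `𝔨 = 𝔷(𝔨) ⊕ [𝔨, 𝔨]`. An abelian ideal `I` is
central, because for `x ∈ I` we get `Φ([x, y], [x, y]) = -Φ(y, [x, [x, y]]) = 0`; as `[𝔨, 𝔨]`
has trivial centre and inherits an invariant anisotropic form, it has no abelian ideals, so it is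
semisimple.
-/

attribute [local instance] LieRing.ofAssociativeRing

open LinearMap (BilinForm BilinMap)

namespace LinearMap.BilinForm

lemma anisotropic_compl₁₂ {R M M' : Type*} [CommSemiring R] [AddCommMonoid M] [Module R M]
    [AddCommMonoid M'] [Module R M'] {B : BilinForm R M} (hB : B.toQuadraticMap.Anisotropic)
    {f : M' →ₗ[R] M} (hf : Function.Injective f) :
    (BilinMap.toQuadraticMap (B.compl₁₂ f f)).Anisotropic :=
  fun x hx => hf <| by rw [map_zero]; exact hB (f x) hx

lemma isCompl_orthogonal_of_anisotropic {K V : Type*} [Field K] [AddCommGroup V] [Module K V]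
    [FiniteDimensional K V] {B : BilinForm K V} (hB_refl : B.IsRefl)
    (hB : B.toQuadraticMap.Anisotropic) (W : Submodule K V) : IsCompl W (B.orthogonal W) :=
  (isCompl_orthogonal_iff_disjoint hB_refl).2 <|
    Submodule.disjoint_def.2 fun x hxW hxW' => hB x (hxW' x hxW)

lemma lieInvariant_compl₁₂ {R L L' : Type*} [CommRing R] [LieRing L] [LieAlgebra R L]
    [LieRing L'] [LieAlgebra R L'] {Φ : BilinForm R L} (hΦ : Φ.lieInvariant L)
    (f : L' →ₗ⁅R⁆ L) : lieInvariant L' (Φ.compl₁₂ (f : L' →ₗ[R] L) (f : L' →ₗ[R] L)) :=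
  fun x y z => by simp [hΦ (f x)]

end LinearMap.BilinForm

namespace LieAlgebra

section CommRing

variable {R L : Type*} [CommRing R] [LieRing L] [LieAlgebra R L] {Φ : BilinForm R L}

lemma center_eq_orthogonal_derivedSeries (hΦ_inv : Φ.lieInvariant L) (hΦ_refl : Φ.IsRefl)
    (hΦ_sep : Φ.SeparatingLeft) :
    center R L = InvariantForm.orthogonal Φ hΦ_inv (derivedSeries R L 1) := by
  ext c
  rw [InvariantForm.mem_orthogonal, LieModule.mem_maxTrivSubmodule]
  constructor
  · intro hc x hx
    replace hx : x ∈ Submodule.span R {⁅a, b⁆ | (a : L) (b : L)} := by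
      rw [← coe_derivedSeries_one_eq]; exact hx
    induction hx using Submodule.span_induction with
    | mem _ h =>
      obtain ⟨a, b, rfl⟩ := h
      rw [hΦ_inv, hc, map_zero, neg_zero]
    | zero => simp
    | add _ _ _ _ h₁ h₂ => simp [h₁, h₂]
    | smul _ _ _ h => simp [h]
  · intro hc a
    refine hΦ_sep _ fun w => ?_
    rw [hΦ_inv, neg_eq_zero]
    exact hΦ_refl _ _ <| hc _ <| LieSubmodule.lie_mem_lie (LieSubmodule.mem_top a)
      (LieSubmodule.mem_top w)

lemma le_center_of_isLieAbelian (hΦ_inv : Φ.lieInvariant L) (hΦ : Φ.toQuadraticMap.Anisotropic)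
    (I : LieIdeal R L) [IsLieAbelian I] : I ≤ center R L := by
  intro x hx
  rw [LieModule.mem_maxTrivSubmodule]
  intro y
  have hxy : ⁅x, y⁆ ∈ I := lie_mem_left R L I x y hx
  have hxxy : ⁅x, ⁅x, y⁆⁆ = 0 := by
    have := LieSubmodule.lie_mem_lie hx hxy
    rwa [(LieSubmodule.lie_abelian_iff_lie_self_eq_bot I).1 inferInstance,
      LieSubmodule.mem_bot] at this
  have : ⁅x, y⁆ = 0 := hΦ _ <| by
    rw [BilinMap.toQuadraticMap_apply, hΦ_inv, hxxy, map_zero, neg_zero]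
  rw [← lie_skew, this, neg_zero]

lemma center_eq_bot_of_isCompl {I : LieIdeal R L} (h : IsCompl (center R L) I) :
    center R I = ⊥ := by
  refine (LieSubmodule.eq_bot_iff _).2 fun x hx => ?_
  rw [LieModule.mem_maxTrivSubmodule] at hx
  have hx_center : (x : L) ∈ center R L := by
    rw [LieModule.mem_maxTrivSubmodule]
    intro a
    have ha : a ∈ center R L ⊔ I := h.codisjoint.eq_top ▸ LieSubmodule.mem_top a
    rw [← LieSubmodule.mem_toSubmodule, LieSubmodule.sup_toSubmodule] at ha
    obtain ⟨c, hc, d, hd, rfl⟩ := Submodule.mem_sup.1 ha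
    rw [add_lie, ← lie_skew, (LieModule.mem_maxTrivSubmodule R L L _).1 hc, neg_zero, zero_add]
    exact congrArg Subtype.val (hx ⟨d, hd⟩)
  exact Subtype.ext <| h.disjoint.le_bot ⟨hx_center, x.2⟩

end CommRing

variable {K L : Type*} [Field K] [LieRing L] [LieAlgebra K L] [FiniteDimensional K L]
  {Φ : BilinForm K L} (hΦ_inv : Φ.lieInvariant L) (hΦ_refl : Φ.IsRefl)
  (hΦ : Φ.toQuadraticMap.Anisotropic)
include hΦ_inv hΦ_refl hΦ

lemma isCompl_center_derivedSeries : IsCompl (center K L) (derivedSeries K L 1) := by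
  rw [center_eq_orthogonal_derivedSeries hΦ_inv hΦ_refl
      (BilinForm.separatingLeft_of_anisotropic hΦ),
    ← LieSubmodule.isCompl_toSubmodule, InvariantForm.orthogonal_toSubmodule]
  exact (Φ.isCompl_orthogonal_of_anisotropic hΦ_refl hΦ _).symm

lemma isSemisimple_of_center_eq_bot (h : center K L = ⊥) : IsSemisimple K L :=
  InvariantForm.isSemisimple_of_nondegenerate Φ
    (hΦ_refl.nondegenerate_iff_separatingLeft.2 (BilinForm.separatingLeft_of_anisotropic hΦ))
    hΦ_inv hΦ_refl fun I hI _ => hI.1 <| eq_bot_iff.2 <| h ▸ le_center_of_isLieAbelian hΦ_inv hΦ I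

lemma isSemisimple_derivedSeries_one : IsSemisimple K (derivedSeries K L 1) :=
  isSemisimple_of_center_eq_bot (Φ := Φ.compl₁₂ (derivedSeries K L 1).incl.toLinearMap
      (derivedSeries K L 1).incl.toLinearMap)
    (BilinForm.lieInvariant_compl₁₂ hΦ_inv _) (fun _ _ => hΦ_refl _ _)
    (BilinForm.anisotropic_compl₁₂ hΦ (LieIdeal.incl_injective _))
    (center_eq_bot_of_isCompl (isCompl_center_derivedSeries hΦ_inv hΦ_refl hΦ))

end LieAlgebra

section TraceForm

variable {V : Type*}

section Module
variable [AddCommGroup V] [Module ℂ V]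

variable (V) in
noncomputable def negReTraceForm : BilinForm ℝ (Module.End ℂ V) :=
  (LinearMap.mul ℝ (Module.End ℂ V)).compr₂
    (-(Complex.reLm ∘ₗ (LinearMap.trace ℂ V).restrictScalars ℝ))

lemma negReTraceForm_apply (x y : Module.End ℂ V) :
    negReTraceForm V x y = -(LinearMap.trace ℂ V (x * y)).re :=
  rfl

lemma negReTraceForm_isRefl : (negReTraceForm V).IsRefl := fun x y h => by
  rwa [negReTraceForm_apply, LinearMap.trace_mul_comm, ← negReTraceForm_apply]

lemma negReTraceForm_lieInvariant : BilinForm.lieInvariant (Module.End ℂ V) (negReTraceForm V) :=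
  fun x y z => by
    rw [negReTraceForm_apply, negReTraceForm_apply, ← lie_skew x y, neg_mul, map_neg,
      Complex.neg_re, LinearMap.trace_lie_mul_eq]

end Module

variable [NormedAddCommGroup V] [InnerProductSpace ℂ V]

lemma negReTraceForm_self_eq_sum_norm_sq {ι : Type*} [Fintype ι] (b : OrthonormalBasis ι ℂ V)
    {x : Module.End ℂ V} (hx : ∀ u w : V, inner ℂ (x u) w = -(inner ℂ u (x w) : ℂ)) :
    negReTraceForm V x x = ∑ i, ‖x (b i)‖ ^ 2 := by
  have hterm : ∀ i, inner ℂ (b i) (x (x (b i))) = -((‖x (b i)‖ ^ 2 : ℝ) : ℂ) := fun i => by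
    rw [← neg_eq_iff_eq_neg, ← hx, inner_self_eq_norm_sq_to_K]; norm_cast
  simp [negReTraceForm_apply, LinearMap.trace_eq_sum_inner _ b, hterm, -Complex.ofReal_pow]

lemma eq_zero_of_negReTraceForm_self_eq_zero [FiniteDimensional ℂ V] {x : Module.End ℂ V}
    (hx : ∀ u w : V, inner ℂ (x u) w = -(inner ℂ u (x w) : ℂ)) (h : negReTraceForm V x x = 0) :
    x = 0 := by
  set b := stdOrthonormalBasis ℂ V
  rw [negReTraceForm_self_eq_sum_norm_sq b hx,
    Finset.sum_eq_zero_iff_of_nonneg fun _ _ => sq_nonneg _] at h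
  exact b.toBasis.ext fun i => by simpa using h i (Finset.mem_univ i)

end TraceForm

/-- Let `𝔨` be a real Lie subalgebra of the endomorphism algebra of a
finite-dimensional complex inner product space `V` (with bracket the commutator)
consisting of skew-Hermitian operators.  Then `𝔨` is a reductive Lie algebra: it is the
direct sum of its center and its derived subalgebra `[𝔨, 𝔨]`, and `[𝔨, 𝔨]` is a
semisimple Lie algebra. -/
theorem skewHermitian_lieSubalgebra_reductive
    {V : Type*} [NormedAddCommGroup V] [InnerProductSpace ℂ V] [FiniteDimensional ℂ V]
    (k : LieSubalgebra ℝ (Module.End ℂ V))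
    (hskew : ∀ ξ ∈ k, ∀ u w : V, inner ℂ (ξ u) w = -(inner ℂ u (ξ w) : ℂ)) :
    IsCompl (LieAlgebra.center ℝ k) (LieAlgebra.derivedSeries ℝ k 1) ∧
    LieAlgebra.IsSemisimple ℝ (LieAlgebra.derivedSeries ℝ k 1) := by
  set Φ : BilinForm ℝ k :=
    (negReTraceForm V).compl₁₂ (k.incl : k →ₗ[ℝ] Module.End ℂ V) (k.incl : k →ₗ[ℝ] Module.End ℂ V)
  have hΦ_inv : BilinForm.lieInvariant k Φ :=
    BilinForm.lieInvariant_compl₁₂ negReTraceForm_lieInvariant k.incl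
  have hΦ_refl : Φ.IsRefl := fun _ _ => negReTraceForm_isRefl _ _
  have hΦ : (BilinMap.toQuadraticMap Φ).Anisotropic := fun x hx =>
    Subtype.ext <| eq_zero_of_negReTraceForm_self_eq_zero (hskew x x.2) hx
  exact ⟨LieAlgebra.isCompl_center_derivedSeries hΦ_inv hΦ_refl hΦ,
    LieAlgebra.isSemisimple_derivedSeries_one hΦ_inv hΦ_refl hΦ⟩
end
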